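/- For every T ≥ 1, the T-forward composition lift G_φ^{∘T} does not simulate G_ψ; moreover, the full forward composition lift G_φ^∘ (the union over all T ≥ 0 of G_φ^{∘T}) does not simulate G_ψ. -/
import Mathlib


open Filter

/-- A labeled digraph on node type `S` with alphabet `A`, given by its edge set,
is path-complete if every nonempty word is the label sequence of some path. -/
def PathComplete {S A : Type*} (E : Set (S × S × A)) : Prop :=
  ∀ w : List A, w ≠ [] → ∃ s : Fin (w.length + 1) → S,
    ∀ j : Fin w.length, (s j.castSucc, s j.succ, w.get j) ∈ E

/-- `G₁` (edge set `E₁`) simulates `G₂` (edge set `E₂`). -/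
def Simulates {S₁ S₂ A : Type*} (E₁ : Set (S₁ × S₁ × A)) (E₂ : Set (S₂ × S₂ × A)) : Prop :=
  ∃ R : S₂ → S₁, ∀ a b i, (a, b, i) ∈ E₂ → (R a, R b, i) ∈ E₁

/-- Simulation where the simulating graph has node set `V₁` inside ambient type `N₁`. -/
def SimulatesOn {N₁ N₂ A : Type*} (V₁ : Set N₁) (E₁ : Set (N₁ × N₁ × A))
    (E₂ : Set (N₂ × N₂ × A)) : Prop :=
  ∃ R : N₂ → N₁, (∀ s, R s ∈ V₁) ∧ ∀ a b i, (a, b, i) ∈ E₂ → (R a, R b, i) ∈ E₁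

/-- Class K∞ function. -/
def IsKInfty (α : ℝ → ℝ) : Prop :=
  Continuous α ∧ StrictMono α ∧ α 0 = 0 ∧ Tendsto α atTop atTop

/-- Membership in `Lyap₀(ℝⁿ)`. -/
def IsLyap {n : ℕ} (V : EuclideanSpace ℝ (Fin n) → ℝ) : Prop :=
  Continuous V ∧ V 0 = 0 ∧ (∀ x, x ≠ 0 → 0 < V x) ∧
  ∃ α₁ α₂ : ℝ → ℝ, IsKInfty α₁ ∧ IsKInfty α₂ ∧ ∀ x, α₁ ‖x‖ ≤ V x ∧ V x ≤ α₂ ‖x‖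

/-- `(V_s)_{s}` together with `γ` is admissible for the graph with edge set `E`
and the switched maps `f`. -/
def Admissible {S A : Type*} {n : ℕ} (E : Set (S × S × A))
    (f : A → EuclideanSpace ℝ (Fin n) → EuclideanSpace ℝ (Fin n))
    (V : S → EuclideanSpace ℝ (Fin n) → ℝ) (γ : ℝ) : Prop :=
  ∀ a b i, (a, b, i) ∈ E → ∀ x, V a x ≥ γ * V b (f i x)

/-- Edge set of the `T`-sum lift: nodes are multisets of size `T`. -/
def sumLiftEdgesT {S A : Type*} (E : Set (S × S × A)) (T : ℕ) :
    Set (Multiset S × Multiset S × A) :=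
  { e | ∃ L : List (S × S), L.length = T ∧ (∀ p ∈ L, (p.1, p.2, e.2.2) ∈ E) ∧
      e.1 = ↑(L.map Prod.fst) ∧ e.2.1 = ↑(L.map Prod.snd) }

/-- Edge set of the sum lift `G^⊕` (union over all `T ≥ 1`). -/
def sumLiftEdges {S A : Type*} (E : Set (S × S × A)) : Set (Multiset S × Multiset S × A) :=
  ⋃ T ∈ Set.Ici 1, sumLiftEdgesT E T

/-- Edge set of the `T`-forward composition lift `G^{∘T}`; a word `(j₁, …, j_T)` is
encoded as the list `[j₁, …, j_T]`.  For `T = 0` this is `G` itself (with empty words). -/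
def fwdLiftEdges {S A : Type*} (E : Set (S × S × A)) :
    ℕ → Set ((S × List A) × (S × List A) × A)
  | 0 => { e | ∃ (a b : S) (i : A), (a, b, i) ∈ E ∧ e = ((a, []), (b, []), i) }
  | T + 1 => { e | ∃ (a b : S) (i : A) (l : List A) (jT : A), (a, b, i) ∈ E ∧ l.length = T ∧
      e = ((a, l ++ [jT]), (b, i :: l), jT) }

/-- Edge set of the `T`-backward composition lift `G^{∘-T}`. -/
def bwdLiftEdges {S A : Type*} (E : Set (S × S × A)) :
    ℕ → Set ((S × List A) × (S × List A) × A)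
  | 0 => { e | ∃ (a b : S) (i : A), (a, b, i) ∈ E ∧ e = ((a, []), (b, []), i) }
  | T + 1 => { e | ∃ (a b : S) (i : A) (l : List A) (jT : A), (a, b, i) ∈ E ∧ l.length = T ∧
      e = ((a, i :: l), (b, l ++ [jT]), jT) }

/-- The underlying undirected graph on node set `V` with labeled edge set `E` is connected. -/
def ConnectedOn {N A : Type*} (V : Set N) (E : Set (N × N × A)) : Prop :=
  ∀ x ∈ V, ∀ y ∈ V,
    Relation.ReflTransGen (fun u v => ∃ i, (u, v, i) ∈ E ∨ (v, u, i) ∈ E) x y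

/-- Transpose of a labeled digraph (reverse all edges). -/
def transposeEdges {S A : Type*} (E : Set (S × S × A)) : Set (S × S × A) :=
  { e | (e.2.1, e.1, e.2.2) ∈ E }

/-- Strong connectedness of a labeled digraph. -/
def StronglyConnectedEdges {S A : Type*} (E : Set (S × S × A)) : Prop :=
  ∀ x y : S, Relation.ReflTransGen (fun u v => ∃ i, (u, v, i) ∈ E) x y

/-- Graph `G_φ`: nodes `a = 0`, `b = 1`, `c = 2`; labels `1 = 0`, `2 = 1`. -/
def GphiEdges : Set (Fin 3 × Fin 3 × Fin 2) :=
  {(0, 0, 0), (0, 1, 0), (1, 0, 1), (0, 2, 1), (2, 0, 1)}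

/-- Graph `G_ψ`: nodes `a' = 0`, `b' = 1`; labels `1 = 0`, `2 = 1`. -/
def GpsiEdges : Set (Fin 2 × Fin 2 × Fin 2) :=
  {(0, 0, 0), (0, 1, 0), (0, 1, 1), (1, 0, 1)}

lemma compLift_aux : ∀ (T : ℕ) (e : (Fin 3 × List (Fin 2)) × (Fin 3 × List (Fin 2)) × Fin 2),
    e ∈ fwdLiftEdges GphiEdges T →
      (T = 0 ∧ e.1.2 = [] ∧ e.2.1.2 = [] ∧ (e.1.1, e.2.1.1, e.2.2) ∈ GphiEdges)
      ∨ e.1.2.getLast? = some e.2.2 := by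
  intro T e he
  cases T with
  | zero =>
    obtain ⟨a, b, i, hab, rfl⟩ := he
    exact Or.inl ⟨rfl, rfl, rfl, hab⟩
  | succ T =>
    obtain ⟨a, b, i, l, jT, hab, hl, rfl⟩ := he
    exact Or.inr (by simp)

/-- Step 2 of Example: Conjecture (ii) ⇏ (i).  For every `T ≥ 1` the
`T`-forward composition lift `G_φ^{∘T}` does not simulate `G_ψ`, and the full forward
composition lift `G_φ^∘ = ⋃_{T ≥ 0} G_φ^{∘T}` does not simulate `G_ψ` either. -/
theorem comp_lift_does_not_simulate_gpsi :
    (∀ T : ℕ, 1 ≤ T →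
      ¬ SimulatesOn {p : Fin 3 × List (Fin 2) | p.2.length = T}
          (fwdLiftEdges GphiEdges T) GpsiEdges) ∧
    ¬ SimulatesOn (Set.univ : Set (Fin 3 × List (Fin 2)))
        (⋃ T : ℕ, fwdLiftEdges GphiEdges T) GpsiEdges := by
  
  constructor
  · rintro T hT ⟨R, hV, hE⟩
    have h00 := hE 0 0 0 (by simp [GpsiEdges])
    have h01 := hE 0 1 1 (by simp [GpsiEdges])
    rcases compLift_aux T _ h00 with ⟨rfl, -⟩ | h0
    · omega
    rcases compLift_aux T _ h01 with ⟨rfl, -⟩ | h1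
    · omega
    have : some (0 : Fin 2) = some 1 := h0.symm.trans h1
    simp at this
  · rintro ⟨R, hV, hE⟩
    have h00 := hE 0 0 0 (by simp [GpsiEdges])
    have h01 := hE 0 1 1 (by simp [GpsiEdges])
    have h0b := hE 0 1 0 (by simp [GpsiEdges])
    simp only [Set.mem_iUnion] at h00 h01 h0b
    obtain ⟨T0, h00⟩ := h00
    obtain ⟨T1, h01⟩ := h01
    obtain ⟨T2, h0b⟩ := h0b
    rcases compLift_aux T0 _ h00 with ⟨-, hw0, -, hn0⟩ | h0
    · rcases compLift_aux T1 _ h01 with ⟨-, -, -, hn1⟩ | h1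
      · rcases compLift_aux T2 _ h0b with ⟨-, -, -, hn2⟩ | h2
        · simp only [GphiEdges, Set.mem_insert_iff, Set.mem_singleton_iff,
            Prod.mk.injEq] at hn0 hn1 hn2
          obtain ⟨x, hx⟩ : ∃ x, (R 0).1 = x := ⟨_, rfl⟩
          obtain ⟨y, hy⟩ : ∃ y, (R 1).1 = y := ⟨_, rfl⟩
          rw [hx, hy] at hn1 hn2; rw [hx] at hn0
          fin_cases x <;> fin_cases y <;> simp_all
        · rw [hw0] at h2; simp at h2
      · rw [hw0] at h1; simp at h1
    · rcases compLift_aux T1 _ h01 with ⟨-, hw1, -, -⟩ | h1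
      · rw [hw1] at h0; simp at h0
      · have : some (0 : Fin 2) = some 1 := h0.symm.trans h1
        simp at this
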